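/- Let U ⊆ ℂ be open and let γ₀, γ₁ : [0,1] → ℂ be closed piecewise C¹ paths that are homotopic through closed paths inside a compact set K with K ⊆ U (more precisely, there is r > 0 with {z : dist(z,K) ≤ r} ⊆ U). Then ∮_{γ₀} f(z) dz = ∮_{γ₁} f(z) dz for every function f holomorphic on U. -/

import Mathlib

open Set intervalIntegral

def PiecewiseC1On (γ : ℝ → ℂ) (a b : ℝ) : Prop :=
  ContinuousOn γ (Set.Icc a b) ∧ ∃ n : ℕ, ∃ p : ℕ → ℝ, 0 < n ∧ p 0 = a ∧ p n = b ∧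
    (∀ i < n, p i < p (i + 1)) ∧ ∀ i < n, ContDiffOn ℝ 1 γ (Set.Icc (p i) (p (i + 1)))

/-!
Cut the homotopy square into an `m × m` grid so fine that `σ` maps every cell into the disc of
radius `r` about one of its corners; that disc lies in `U`, so `f` has a primitive on it. Replace
each row `t ↦ σ (j/m, t)` by the closed polygon through its grid points. Where a primitive `F` is
available, the integral along a segment `[a, b]` is `F b - F a`; hence the integral along `γ₀`
(resp. `γ₁`) equals the polygonal integral of row `0` (resp. row `m`), and the polygonal integrals
of two adjacent rows differ by a telescoping sum over the cells between them, whose boundary terms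
cancel because every row is closed.
-/

open Metric MeasureTheory

noncomputable def segmentIntegral (f : ℂ → ℂ) (a b : ℂ) : ℂ :=
  ∫ t in (0:ℝ)..1, f (a + t • (b - a)) * (b - a)

theorem segmentIntegral_eq_sub {f F : ℂ → ℂ} {s : Set ℂ} (hs : Convex ℝ s)
    (hF : ∀ z ∈ s, HasDerivAt F (f z) z) (hf : ContinuousOn f s) {a b : ℂ}
    (ha : a ∈ s) (hb : b ∈ s) :
    segmentIntegral f a b = F b - F a := by
  have hseg : ∀ t ∈ uIcc (0:ℝ) 1, a + t • (b - a) ∈ s := fun t ht =>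
    hs.add_smul_sub_mem ha hb (by rwa [uIcc_of_le zero_le_one] at ht)
  have hderiv : ∀ t ∈ uIcc (0:ℝ) 1,
      HasDerivAt (fun t : ℝ => F (a + t • (b - a))) (f (a + t • (b - a)) * (b - a)) t := by
    intro t ht
    have hline : HasDerivAt (fun t : ℝ => a + t • (b - a)) (b - a) t := by
      simpa using ((hasDerivAt_id t).smul_const (b - a)).const_add a
    exact (hF _ (hseg t ht)).comp t hline
  have hcont : ContinuousOn (fun t : ℝ => f (a + t • (b - a)) * (b - a)) (uIcc 0 1) :=
    (hf.comp (by fun_prop) hseg).mul continuousOn_const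
  rw [segmentIntegral, integral_eq_sub_of_hasDerivAt hderiv hcont.intervalIntegrable]
  simp

theorem sum_range_add_eq_add_sum_range {α M : Type*} [AddCommGroup M] (I : α → α → M)
    (z w : ℕ → α) (n : ℕ)
    (hcell : ∀ k < n, I (z k) (z (k + 1)) + I (z (k + 1)) (w (k + 1)) =
      I (z k) (w k) + I (w k) (w (k + 1))) :
    (∑ k ∈ Finset.range n, I (z k) (z (k + 1))) + I (z n) (w n) =
      I (z 0) (w 0) + ∑ k ∈ Finset.range n, I (w k) (w (k + 1)) := by
  induction n with
  | zero => simp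
  | succ n ih =>
    rw [Finset.sum_range_succ, Finset.sum_range_succ, add_assoc, hcell n n.lt_succ_self,
      ← add_assoc, ih fun k hk => hcell k (hk.trans n.lt_succ_self)]
    abel

theorem integral_comp_mul_deriv_eq_sub {f F : ℂ → ℂ} {s : Set ℂ} {γ : ℝ → ℂ} {a b : ℝ}
    {E : Set ℝ} (hE : E.Countable) (hγc : ContinuousOn γ (uIcc a b))
    (hγd : ∀ t ∈ Ioo (min a b) (max a b) \ E, DifferentiableAt ℝ γ t)
    (hγs : MapsTo γ (uIcc a b) s) (hF : ∀ z ∈ s, HasDerivAt F (f z) z)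
    (hint : IntervalIntegrable (fun t => f (γ t) * deriv γ t) volume a b) :
    ∫ t in a..b, f (γ t) * deriv γ t = F (γ b) - F (γ a) :=
  integral_eq_of_hasDerivAt_off_countable (F ∘ γ) _ hE
    (ContinuousOn.comp (fun z hz => (hF z hz).continuousAt.continuousWithinAt) hγc hγs)
    (fun t ht => (hF _ (hγs (Ioo_subset_Icc_self ht.1))).comp t (hγd t ht).hasDerivAt) hint

theorem ContDiffOn.intervalIntegrable_comp_mul_deriv {f : ℂ → ℂ} {s : Set ℂ} {γ : ℝ → ℂ}
    {u v : ℝ} (hγ : ContDiffOn ℝ 1 γ (Icc u v)) (huv : u < v) (hf : ContinuousOn f s)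
    (hγs : MapsTo γ (Icc u v) s) :
    IntervalIntegrable (fun t => f (γ t) * deriv γ t) volume u v := by
  have hcont : ContinuousOn (fun t => f (γ t) * derivWithin γ (Icc u v) t) (Icc u v) :=
    (hf.comp hγ.continuousOn hγs).mul
      (hγ.continuousOn_derivWithin (uniqueDiffOn_Icc huv) le_rfl)
  rw [intervalIntegrable_iff_integrableOn_Ioo_of_le huv.le]
  refine (hcont.integrableOn_Icc.mono_set Ioo_subset_Icc_self).congr_fun (fun t ht => ?_)
    measurableSet_Ioo
  simp only [derivWithin_of_mem_nhds (Icc_mem_nhds ht.1 ht.2)]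

theorem mem_Icc_of_lt_succ {p : ℕ → ℝ} {n i : ℕ} (hp : ∀ k < n, p k < p (k + 1))
    (hi : i ≤ n) : p i ∈ Icc (p 0) (p n) := by
  have hmono : Monotone fun k => p (min k n) := monotone_nat_of_le_succ fun k => by
    rcases lt_or_ge k n with hk | hk
    · rw [min_eq_left hk.le, min_eq_left hk]
      exact (hp k hk).le
    · rw [min_eq_right hk, min_eq_right (by omega)]
  exact ⟨by simpa [hi] using hmono (Nat.zero_le i), by simpa [hi] using hmono hi⟩

theorem exists_mem_Ico_of_mem_Ico {p : ℕ → ℝ} {t : ℝ} :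
    ∀ {n : ℕ}, t ∈ Ico (p 0) (p n) → ∃ i < n, t ∈ Ico (p i) (p (i + 1))
  | 0, ht => absurd ht.2 (not_lt.2 ht.1)
  | n + 1, ht => by
    by_cases htn : t < p n
    · obtain ⟨i, hi, hti⟩ := exists_mem_Ico_of_mem_Ico ⟨ht.1, htn⟩
      exact ⟨i, hi.trans n.lt_succ_self, hti⟩
    · exact ⟨n, n.lt_succ_self, not_lt.1 htn, ht.2⟩

namespace PiecewiseC1On

variable {γ : ℝ → ℂ} {a b : ℝ}

theorem exists_countable_differentiableAt (hγ : PiecewiseC1On γ a b) :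
    ∃ E : Set ℝ, E.Countable ∧ ∀ t ∈ Icc a b \ E, DifferentiableAt ℝ γ t := by
  obtain ⟨-, n, p, -, rfl, rfl, -, hC1⟩ := hγ
  refine ⟨range p, countable_range p, fun t ⟨ht, htp⟩ => ?_⟩
  have htn : t < p n := lt_of_le_of_ne ht.2 fun h => htp ⟨n, h.symm⟩
  obtain ⟨i, hi, hti⟩ := exists_mem_Ico_of_mem_Ico ⟨ht.1, htn⟩
  have hti' : p i < t := lt_of_le_of_ne hti.1 fun h => htp ⟨i, h⟩
  exact ((hC1 i hi).contDiffAt (Icc_mem_nhds hti' hti.2)).differentiableAt one_ne_zero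

theorem intervalIntegrable_comp_mul_deriv (hγ : PiecewiseC1On γ a b) {f : ℂ → ℂ}
    {s : Set ℂ} (hf : ContinuousOn f s) (hγs : MapsTo γ (Icc a b) s) :
    IntervalIntegrable (fun t => f (γ t) * deriv γ t) volume a b := by
  obtain ⟨-, n, p, -, rfl, rfl, hp, hC1⟩ := hγ
  refine IntervalIntegrable.trans_iterate fun i hi => (hC1 i hi).intervalIntegrable_comp_mul_deriv
    (hp i hi) hf (hγs.mono_left (Icc_subset_Icc ?_ ?_))
  · exact (mem_Icc_of_lt_succ hp hi.le).1
  · exact (mem_Icc_of_lt_succ hp hi).2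

theorem integral_eq_sum_segmentIntegral (hγ : PiecewiseC1On γ a b) {f : ℂ → ℂ} {U : Set ℂ}
    (hf : DifferentiableOn ℂ f U) (hγU : MapsTo γ (Icc a b) U) {n : ℕ} {s : ℕ → ℝ}
    (hs0 : s 0 = a) (hsn : s n = b) (hs : ∀ k ≤ n, s k ∈ Icc a b) (c : ℕ → ℂ) (ρ : ℝ)
    (hball : ∀ k < n, ball (c k) ρ ⊆ U)
    (hγball : ∀ k < n, MapsTo γ (uIcc (s k) (s (k + 1))) (ball (c k) ρ)) :
    ∫ t in a..b, f (γ t) * deriv γ t =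
      ∑ k ∈ Finset.range n, segmentIntegral f (γ (s k)) (γ (s (k + 1))) := by
  obtain ⟨E, hE, hγd⟩ := hγ.exists_countable_differentiableAt
  have hsub : ∀ k < n, uIcc (s k) (s (k + 1)) ⊆ Icc a b := fun k hk =>
    uIcc_subset_Icc (hs k hk.le) (hs (k + 1) hk)
  have hint : ∀ k < n,
      IntervalIntegrable (fun t => f (γ t) * deriv γ t) volume (s k) (s (k + 1)) :=
    fun k hk => (hγ.intervalIntegrable_comp_mul_deriv hf.continuousOn hγU).mono_set
      ((hsub k hk).trans Icc_subset_uIcc)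
  rw [← hs0, ← hsn, ← sum_integral_adjacent_intervals hint]
  refine Finset.sum_congr rfl fun k hk => ?_
  have hk : k < n := Finset.mem_range.1 hk
  obtain ⟨F, hF⟩ := (hf.mono (hball k hk)).isExactOn_ball
  rw [integral_comp_mul_deriv_eq_sub hE (hγ.1.mono (hsub k hk))
      (fun t ht => hγd t ⟨hsub k hk (Ioo_subset_Icc_self ht.1), ht.2⟩) (hγball k hk) hF
      (hint k hk),
    segmentIntegral_eq_sub (convex_ball _ _) hF (hf.mono (hball k hk)).continuousOn
      (hγball k hk left_mem_uIcc) (hγball k hk right_mem_uIcc)]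

end PiecewiseC1On

theorem IsCompact.exists_pos_nat_forall_dist_lt {α β : Type*} [PseudoMetricSpace α]
    [PseudoMetricSpace β] {s : Set α} {g : α → β} (hs : IsCompact s) (hg : ContinuousOn g s)
    {ε : ℝ} (hε : 0 < ε) :
    ∃ m : ℕ, 0 < m ∧ ∀ p ∈ s, ∀ q ∈ s, dist p q ≤ 1 / m → dist (g p) (g q) < ε := by
  obtain ⟨δ, hδ, hgδ⟩ :=
    uniformContinuousOn_iff.1 (hs.uniformContinuousOn_of_continuous hg) ε hε
  obtain ⟨n, hn⟩ := exists_nat_one_div_lt hδ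
  refine ⟨n + 1, n.succ_pos, fun p hp q hq hpq => hgδ p hp q hq (hpq.trans_lt ?_)⟩
  exact_mod_cast hn

theorem natCast_div_mem_Icc {j m : ℕ} (h : j ≤ m) : (j : ℝ) / m ∈ Icc (0 : ℝ) 1 :=
  ⟨by positivity, div_le_one_of_le₀ (by exact_mod_cast h) m.cast_nonneg⟩

theorem dist_natCast_div_le {i i' m : ℕ} (h : i ≤ i') (h' : i' ≤ i + 1) :
    dist ((i' : ℝ) / m) ((i : ℝ) / m) ≤ 1 / m := by
  rw [Real.dist_eq, ← sub_div, abs_div, Nat.abs_cast]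
  gcongr
  have h' : (i' : ℝ) ≤ i + 1 := by exact_mod_cast h'
  rw [abs_of_nonneg (sub_nonneg.2 (by exact_mod_cast h))]
  linarith

noncomputable def gridPoint (m j k : ℕ) : ℝ × ℝ := ((j : ℝ) / m, (k : ℝ) / m)

theorem gridPoint_mem {m j k : ℕ} (hj : j ≤ m) (hk : k ≤ m) :
    gridPoint m j k ∈ Icc (0 : ℝ) 1 ×ˢ Icc (0 : ℝ) 1 :=
  ⟨natCast_div_mem_Icc hj, natCast_div_mem_Icc hk⟩

theorem dist_gridPoint_le {m j j' k k' : ℕ} (hj : j ≤ j') (hj' : j' ≤ j + 1) (hk : k ≤ k')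
    (hk' : k' ≤ k + 1) : dist (gridPoint m j' k') (gridPoint m j k) ≤ 1 / m :=
  max_le (dist_natCast_div_le hj hj') (dist_natCast_div_le hk hk')

noncomputable def gridRowSum (f : ℂ → ℂ) (σ : ℝ × ℝ → ℂ) (m j : ℕ) : ℂ :=
  ∑ k ∈ Finset.range m, segmentIntegral f (σ (gridPoint m j k)) (σ (gridPoint m j (k + 1)))

section HomotopyGrid

variable {f : ℂ → ℂ} {U : Set ℂ} {σ : ℝ × ℝ → ℂ} {m : ℕ} {r : ℝ}
  (hf : DifferentiableOn ℂ f U)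
  (hball : ∀ p ∈ Icc (0 : ℝ) 1 ×ˢ Icc (0 : ℝ) 1, ball (σ p) r ⊆ U)
  (hfine : ∀ p ∈ Icc (0 : ℝ) 1 ×ˢ Icc (0 : ℝ) 1, ∀ q ∈ Icc (0 : ℝ) 1 ×ˢ Icc (0 : ℝ) 1,
    dist p q ≤ 1 / m → dist (σ p) (σ q) < r)
  (hm : 0 < m)
include hf hball hfine hm

theorem integral_eq_gridRowSum (hr : 0 < r) {γ : ℝ → ℂ}
    (hγ : PiecewiseC1On γ 0 1) {j : ℕ} (hj : j ≤ m)
    (hrow : ∀ t ∈ Icc (0 : ℝ) 1, σ ((j : ℝ) / m, t) = γ t) :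
    ∫ t in (0 : ℝ)..1, f (γ t) * deriv γ t = gridRowSum f σ m j := by
  have hγU : MapsTo γ (Icc 0 1) U := fun t ht =>
    hrow t ht ▸ hball _ ⟨natCast_div_mem_Icc hj, ht⟩ (mem_ball_self hr)
  have hnear : ∀ k < m, MapsTo γ (uIcc ((k : ℝ) / m) (((k + 1 : ℕ) : ℝ) / m))
      (ball (σ (gridPoint m j k)) r) := fun k hk t ht => by
    have htI : t ∈ Icc (0 : ℝ) 1 :=
      uIcc_subset_Icc (natCast_div_mem_Icc hk.le) (natCast_div_mem_Icc hk) ht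
    have hdist : dist t ((k : ℝ) / m) ≤ 1 / m :=
      (Real.dist_le_of_mem_uIcc ht left_mem_uIcc).trans
        (by rw [dist_comm]; exact dist_natCast_div_le k.le_succ le_rfl)
    rw [← hrow t htI]
    exact mem_ball.2 (hfine _ ⟨natCast_div_mem_Icc hj, htI⟩ _ (gridPoint_mem hj hk.le)
      (max_le (dist_natCast_div_le le_rfl j.le_succ) hdist))
  have hγσ : ∀ k ≤ m, γ ((k : ℝ) / m) = σ (gridPoint m j k) := fun k hk =>
    (hrow _ (natCast_div_mem_Icc hk)).symm
  rw [hγ.integral_eq_sum_segmentIntegral hf hγU (s := fun k => (k : ℝ) / m) (by simp)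
    (by simp [hm.ne']) (fun k hk => natCast_div_mem_Icc hk) (fun k => σ (gridPoint m j k)) r
    (fun k hk => hball _ (gridPoint_mem hj hk.le)) hnear]
  exact Finset.sum_congr rfl fun k hk => by
    rw [hγσ k (Finset.mem_range.1 hk).le, hγσ (k + 1) (Finset.mem_range.1 hk)]

variable (hσc : ∀ t ∈ Icc (0 : ℝ) 1, σ (t, 0) = σ (t, 1))
include hσc

theorem gridRowSum_succ {j : ℕ} (hj : j < m) :
    gridRowSum f σ m j = gridRowSum f σ m (j + 1) := by
  have hclosed : ∀ i ≤ m, σ (gridPoint m i m) = σ (gridPoint m i 0) := fun i hi => by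
    simpa [gridPoint, hm.ne'] using (hσc _ (natCast_div_mem_Icc hi)).symm
  have key := sum_range_add_eq_add_sum_range (segmentIntegral f)
    (fun k => σ (gridPoint m j k)) (fun k => σ (gridPoint m (j + 1) k)) m fun k hk => by
      have hcorner : ∀ j' k', j ≤ j' → j' ≤ j + 1 → k ≤ k' → k' ≤ k + 1 →
          σ (gridPoint m j' k') ∈ ball (σ (gridPoint m j k)) r := fun j' k' h₁ h₂ h₃ h₄ =>
        mem_ball.2 (hfine _ (gridPoint_mem (by omega) (by omega)) _
          (gridPoint_mem hj.le hk.le) (dist_gridPoint_le h₁ h₂ h₃ h₄))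
      have h₀₀ := hcorner j k le_rfl (by omega) le_rfl (by omega)
      have h₀₁ := hcorner j (k + 1) le_rfl (by omega) (by omega) le_rfl
      have h₁₀ := hcorner (j + 1) k (by omega) le_rfl le_rfl (by omega)
      have h₁₁ := hcorner (j + 1) (k + 1) (by omega) le_rfl (by omega) le_rfl
      have hfB := hf.mono (hball _ (gridPoint_mem hj.le hk.le))
      obtain ⟨F, hF⟩ := hfB.isExactOn_ball
      simp only [segmentIntegral_eq_sub (convex_ball _ _) hF hfB.continuousOn,
        h₀₀, h₀₁, h₁₀, h₁₁]
      ring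
  rw [hclosed j hj.le, hclosed (j + 1) hj, add_comm] at key
  exact add_left_cancel key

theorem gridRowSum_zero_eq_gridRowSum_self : gridRowSum f σ m 0 = gridRowSum f σ m m := by
  suffices ∀ j ≤ m, gridRowSum f σ m 0 = gridRowSum f σ m j from this m le_rfl
  intro j hj
  induction j with
  | zero => rfl
  | succ j ih => rw [ih (by omega), gridRowSum_succ hf hball hfine hm hσc (by omega)]

end HomotopyGrid

theorem cauchy_homotopic_paths_general (U : Set ℂ)
    (K : Set ℂ) (r : ℝ) (hr : 0 < r)
    (hKU : {z : ℂ | Metric.infDist z K ≤ r} ⊆ U)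
    (γ₀ γ₁ : ℝ → ℂ)
    (h₀ : PiecewiseC1On γ₀ 0 1) (h₁ : PiecewiseC1On γ₁ 0 1)
    (σ : ℝ × ℝ → ℂ) (hσ : ContinuousOn σ (Icc 0 1 ×ˢ Icc 0 1))
    (hσK : ∀ p ∈ Icc (0:ℝ) 1 ×ˢ Icc (0:ℝ) 1, σ p ∈ K)
    (hσ0 : ∀ x ∈ Icc (0:ℝ) 1, σ (0, x) = γ₀ x)
    (hσ1 : ∀ x ∈ Icc (0:ℝ) 1, σ (1, x) = γ₁ x)
    (hσc : ∀ t ∈ Icc (0:ℝ) 1, σ (t, 0) = σ (t, 1))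
    (f : ℂ → ℂ) (hf : DifferentiableOn ℂ f U) :
    ∫ t in (0:ℝ)..1, f (γ₀ t) * deriv γ₀ t = ∫ t in (0:ℝ)..1, f (γ₁ t) * deriv γ₁ t := by
  have hball : ∀ p ∈ Icc (0 : ℝ) 1 ×ˢ Icc (0 : ℝ) 1, ball (σ p) r ⊆ U := fun p hp _ hz =>
    hKU ((infDist_le_dist_of_mem (hσK p hp)).trans (mem_ball.1 hz).le)
  obtain ⟨m, hm, hfine⟩ :=
    (isCompact_Icc.prod isCompact_Icc).exists_pos_nat_forall_dist_lt hσ hr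
  rw [integral_eq_gridRowSum hf hball hfine hm hr h₀ (Nat.zero_le m) (by simpa using hσ0),
    integral_eq_gridRowSum hf hball hfine hm hr h₁ le_rfl (by simpa [hm.ne'] using hσ1)]
  exact gridRowSum_zero_eq_gridRowSum_self hf hball hfine hm hσc

theorem cauchy_homotopic_paths (U : Set ℂ) (hU : IsOpen U)
    (K : Set ℂ) (hK : IsCompact K) (r : ℝ) (hr : 0 < r)
    (hKU : {z : ℂ | Metric.infDist z K ≤ r} ⊆ U)
    (γ₀ γ₁ : ℝ → ℂ)
    (h₀ : PiecewiseC1On γ₀ 0 1) (h₁ : PiecewiseC1On γ₁ 0 1)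
    (hc₀ : γ₀ 0 = γ₀ 1) (hc₁ : γ₁ 0 = γ₁ 1)
    (σ : ℝ × ℝ → ℂ) (hσ : ContinuousOn σ (Icc 0 1 ×ˢ Icc 0 1))
    (hσK : ∀ p ∈ Icc (0:ℝ) 1 ×ˢ Icc (0:ℝ) 1, σ p ∈ K)
    (hσ0 : ∀ x ∈ Icc (0:ℝ) 1, σ (0, x) = γ₀ x)
    (hσ1 : ∀ x ∈ Icc (0:ℝ) 1, σ (1, x) = γ₁ x)
    (hσc : ∀ t ∈ Icc (0:ℝ) 1, σ (t, 0) = σ (t, 1))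
    (f : ℂ → ℂ) (hf : DifferentiableOn ℂ f U) :
    ∫ t in (0:ℝ)..1, f (γ₀ t) * deriv γ₀ t = ∫ t in (0:ℝ)..1, f (γ₁ t) * deriv γ₁ t :=
  cauchy_homotopic_paths_general U K r hr hKU γ₀ γ₁ h₀ h₁ σ hσ hσK hσ0 hσ1 hσc f hf
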